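/- arXiv:1110.3274 — 6 statements merged into one kernel-verified Lean document; each statement's English description precedes it below -/
import Mathlib

section
/- Let x, s, v be complex numbers with x ≠ 0, s² = x² − x³, and v³ = s − x, and set w = (3/2)(x/v + v) − 1. Then 4(w + 1)³ = 27 x w. (Thus k₂(x) is a root of the cubic 4(w+1)³ − 27xw in w.) -/
/-! This is Cardano's formula. Since `(v³ + x)² = s² = x² - x³`, the numbers `v³` and `x³ / v³`
are the two roots of `t² + 2 x t + x³`, so `u = v + x / v` satisfies the depressed cubic
`u³ = 3 x u - 2 x`. The substitution `w = (3/2) u - 1` turns it into `4 (w + 1)³ = 27 x w`. -/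

section Cardano

variable {K : Type*} [Field K]

theorem pow_three_add_sq_eq {x s v : K} (hs : s ^ 2 = x ^ 2 - x ^ 3) (hv : v ^ 3 = s - x) :
    (v ^ 3 + x) ^ 2 = x ^ 2 - x ^ 3 := by
  rw [hv, sub_add_cancel, hs]

theorem ne_zero_of_pow_three_add_sq_eq {x v : K} (hx : x ≠ 0)
    (h : (v ^ 3 + x) ^ 2 = x ^ 2 - x ^ 3) : v ≠ 0 := by
  rintro rfl
  have hx3 : x ^ 3 = 0 := by linear_combination h
  exact hx (pow_eq_zero_iff three_ne_zero |>.mp hx3)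

theorem add_div_pow_three_eq {x v : K} (hv : v ≠ 0) (h : (v ^ 3 + x) ^ 2 = x ^ 2 - x ^ 3) :
    (x / v + v) ^ 3 = 3 * x * (x / v + v) - 2 * x := by
  field_simp
  linear_combination h

theorem four_mul_add_one_pow_three_eq {x u w : K} (h2 : (2 : K) ≠ 0)
    (hu : u ^ 3 = 3 * x * u - 2 * x) (hw : w = 3 / 2 * u - 1) :
    4 * (w + 1) ^ 3 = 27 * x * w := by
  subst hw
  field_simp
  linear_combination 108 * hu

end Cardano

/-- If `x ≠ 0`, `s² = x² - x³`, `v³ = s - x`, and `w = (3/2)(x/v + v) - 1`,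
then `4(w + 1)³ = 27 x w`. -/
theorem stmt_4 (x s v w : ℂ) (hx : x ≠ 0) (hs : s ^ 2 = x ^ 2 - x ^ 3)
    (hv : v ^ 3 = s - x) (hw : w = 3 / 2 * (x / v + v) - 1) :
    4 * (w + 1) ^ 3 = 27 * x * w := by
  have h := pow_three_add_sq_eq hs hv
  have hu := add_div_pow_three_eq (ne_zero_of_pow_three_add_sq_eq hx h) h
  exact four_mul_add_one_pow_three_eq two_ne_zero hu hw
end

section
/- Let x, s, v be complex numbers with x ≠ 0, s² = x² − x³, and v³ = s − x, and let ζ be any complex number with ζ³ = 1. Then w_ζ = (3/2)(x/(ζv) + ζv) − 1 satisfies 4(w_ζ + 1)³ = 27 x w_ζ. (Thus each of the three cube-root branches of k₃ yields a root of the cubic 4(w+1)³ = 27xw, reflecting the multivaluedness of the inverse.) -/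
/-!
Put `a = ζv` and `b = x / a`. Since `(s - x)(-s - x) = x² - s² = x³`, the cube of `b` is the
conjugate `-s - x` of `a³ = s - x`, so `ab = x` and `a³ + b³ = -2x`: these are Cardano's relations,
and expanding `(a + b)³ = a³ + b³ + 3ab(a + b)` shows that `w = (3/2)(a + b) - 1` solves
`4(w + 1)³ = 27xw`.
-/

section Cardano

variable {K : Type*} [Field K]

theorem four_mul_cube_eq_of_mul_eq_of_cube_add_cube [CharZero K] {x a b : K} (hab : a * b = x)
    (hcubes : a ^ 3 + b ^ 3 = -2 * x) :
    4 * ((3 / 2 * (a + b) - 1) + 1) ^ 3 = 27 * x * (3 / 2 * (a + b) - 1) := by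
  linear_combination (27 / 2 : K) * hcubes + (81 / 2 * (a + b)) * hab

variable {x s u : K} (hs : s ^ 2 = x ^ 2 - x ^ 3) (hu : u ^ 3 = s - x)
include hs hu

theorem eq_zero_of_cbrt_eq_zero (h : u = 0) : x = 0 := by
  subst h
  have hsx : s = x := by linear_combination -hu
  subst hsx
  exact pow_eq_zero_iff three_ne_zero |>.mp (by linear_combination hs)

theorem mul_div_cbrt_cancel : u * (x / u) = x := by
  rcases eq_or_ne u 0 with h | h
  · simp [h, eq_zero_of_cbrt_eq_zero hs hu h]
  · exact mul_div_cancel₀ x h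

theorem div_cbrt_pow_three : (x / u) ^ 3 = -s - x := by
  rcases eq_or_ne u 0 with h | h
  · have hx := eq_zero_of_cbrt_eq_zero hs hu h
    subst h hx
    simp [show s = 0 by linear_combination -hu]
  · rw [div_pow, hu, div_eq_iff (hu ▸ pow_ne_zero 3 h)]
    linear_combination hs

end Cardano

theorem stmt_5_general (x s v ζ : ℂ) (hs : s ^ 2 = x ^ 2 - x ^ 3)
    (hv : v ^ 3 = s - x) (hζ : ζ ^ 3 = 1) :
    4 * ((3 / 2 * (x / (ζ * v) + ζ * v) - 1) + 1) ^ 3 =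
      27 * x * (3 / 2 * (x / (ζ * v) + ζ * v) - 1) := by
  have hu : (ζ * v) ^ 3 = s - x := by rw [mul_pow, hζ, one_mul, hv]
  rw [add_comm (x / _)]
  apply four_mul_cube_eq_of_mul_eq_of_cube_add_cube (mul_div_cbrt_cancel hs hu)
  rw [hu, div_cbrt_pow_three hs hu]
  ring

/-- If `x ≠ 0`, `s² = x² - x³`, `v³ = s - x`, and `ζ³ = 1`, then
`w_ζ = (3/2)(x/(ζv) + ζv) - 1` satisfies `4(w_ζ + 1)³ = 27 x w_ζ`. -/
theorem stmt_5 (x s v ζ : ℂ) (hx : x ≠ 0) (hs : s ^ 2 = x ^ 2 - x ^ 3)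
    (hv : v ^ 3 = s - x) (hζ : ζ ^ 3 = 1) :
    4 * ((3 / 2 * (x / (ζ * v) + ζ * v) - 1) + 1) ^ 3 =
      27 * x * (3 / 2 * (x / (ζ * v) + ζ * v) - 1) :=
  stmt_5_general x s v ζ hs hv hζ
end

section
/- Let x, s, v be complex numbers with x ≠ 0, s² = x² − x³, and v³ = s − x, and set w = (3/2)(x/v + v) − 1. Then w ≠ 0 and x = 4(w + 1)³/(27 w). -/
/-!
Put `u = x / v + v`, so that `w + 1 = 3u/2`. Since `v³ = s - x`, the relation `s² = x² - x³`
says that `v³` is a root of the resolvent quadratic `T² + 2xT + x³`, and Cardano's identity then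
makes `u` a root of the depressed cubic `u³ - 3xu + 2x`. In terms of `w` this is
`4(w + 1)³ = 27wx`, which forces `w ≠ 0` and can be solved for `x`.
-/

theorem cube_div_add_eq_of_resolvent {K : Type*} [Field K] {a b v : K} (hv : v ≠ 0)
    (h : v ^ 6 + b * v ^ 3 + a ^ 3 = 0) :
    (a / v + v) ^ 3 = 3 * a * (a / v + v) - b := by
  field_simp
  linear_combination h

/-- If `x ≠ 0`, `s² = x² - x³`, `v³ = s - x`, and `w = (3/2)(x/v + v) - 1`,
then `w ≠ 0` and `x = 4(w + 1)³ / (27 w)`. -/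
theorem stmt_6 (x s v w : ℂ) (hx : x ≠ 0) (hs : s ^ 2 = x ^ 2 - x ^ 3)
    (hv : v ^ 3 = s - x) (hw : w = 3 / 2 * (x / v + v) - 1) :
    w ≠ 0 ∧ x = 4 * (w + 1) ^ 3 / (27 * w) := by
  have hresolvent : v ^ 6 + 2 * x * v ^ 3 + x ^ 3 = 0 := by
    linear_combination (v ^ 3 + s + x) * hv + hs
  have hv0 : v ≠ 0 := by
    rintro rfl
    exact hx (pow_eq_zero_iff three_ne_zero |>.mp (by simpa using hresolvent))
  have hcubic := cube_div_add_eq_of_resolvent hv0 hresolvent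
  have hwx : 4 * (w + 1) ^ 3 = 27 * w * x := by
    rw [hw]
    linear_combination (27 / 2 : ℂ) * hcubic
  have hw0 : w ≠ 0 := by
    rintro rfl
    norm_num at hwx
  refine ⟨hw0, ?_⟩
  rw [eq_div_iff (mul_ne_zero (by norm_num) hw0)]
  linear_combination -hwx
end

section
/- Let x be a nonzero complex number and let s, v, w, a, b, y, λ be complex numbers with s² = x² − x³, v³ = s − x, w = (3/2)(x/v + v) − 1, a² = w + 4, b² = w, y = (a − b)/2, and λ = y². Then λ ≠ 0, λ ≠ 1, and 4(1 − λ + λ²)³ = 27 x λ² (1 − λ)². (In other words, λ = (k₁ ∘ k₂)(x)² is a root of the hexic 4(1 − λ + λ²)³ − 27 x λ²(1 − λ)² in λ, which is the paper's claimed verification that k = k₀ ∘ k₁ ∘ k₂ inverts the modular invariant j = 4(1 − λ + λ²)³/(27 λ²(1 − λ)²), expressed as a fractional transformation of λ of degree 6.) -/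
/-!
Write `w = (3/2)(u + v) - 1` with `u = x / v`. Since `uv = x` and, by the equations for `s` and `v`,
`u³ + v³ = -2x`, Cardano's formula shows that `w` is a root of the cubic resolvent
`4(w + 1)³ = 27 x w`. The square-root layer gives `w λ = (1 - λ)²`, i.e. `w = λ + λ⁻¹ - 2`, and
substituting this into the resolvent turns it into `λ³` times the hexic. Finally `λ = 1` would
force `w = 0`, which is not a root of the resolvent.
-/

section

variable {K : Type*} [Field K] [CharZero K]

theorem mul_sq_half_sub_eq_sq {a b w : K} (ha : a ^ 2 = w + 4) (hb : b ^ 2 = w) :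
    w * ((a - b) / 2) ^ 2 = (1 - ((a - b) / 2) ^ 2) ^ 2 := by
  subst hb
  linear_combination (-(a ^ 2 - 4 * a * b + 3 * b ^ 2 - 4) / 16) * ha

/-- Cardano: `w + 1 = (3/2)(u + v)` with `u v = x` and `u³ + v³ = -2x`. -/
theorem cubic_resolvent_of_cardano {x v w : K} (hv : v ≠ 0)
    (hcub : v ^ 6 + 2 * x * v ^ 3 + x ^ 3 = 0) (hw : w = 3 / 2 * (x / v + v) - 1) :
    4 * (w + 1) ^ 3 = 27 * x * w := by
  subst hw
  field_simp
  linear_combination 108 * hcub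

end

theorem hexic_of_cubic_resolvent {R : Type*} [CommRing R] {x w l : R}
    (hwl : w * l = (1 - l) ^ 2) (hres : 4 * (w + 1) ^ 3 = 27 * x * w) :
    4 * (1 - l + l ^ 2) ^ 3 = 27 * x * l ^ 2 * (1 - l) ^ 2 := by
  have hquad : 1 - l + l ^ 2 = l * (w + 1) := by linear_combination -hwl
  calc 4 * (1 - l + l ^ 2) ^ 3 = l ^ 3 * (4 * (w + 1) ^ 3) := by rw [hquad]; ring
    _ = l ^ 2 * (27 * x * (w * l)) := by rw [hres]; ring
    _ = 27 * x * l ^ 2 * (1 - l) ^ 2 := by rw [hwl]; ring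

/-- Composite inversion identity: with `x ≠ 0`, `s² = x² - x³`, `v³ = s - x`,
`w = (3/2)(x/v + v) - 1`, `a² = w + 4`, `b² = w`, `y = (a - b)/2`, `λ = y²`,
one has `λ ≠ 0`, `λ ≠ 1`, and `4(1 - λ + λ²)³ = 27 x λ² (1 - λ)²`. -/
theorem stmt_8 (x s v w a b y l : ℂ) (hx : x ≠ 0)
    (hs : s ^ 2 = x ^ 2 - x ^ 3) (hv : v ^ 3 = s - x)
    (hw : w = 3 / 2 * (x / v + v) - 1)
    (ha : a ^ 2 = w + 4) (hb : b ^ 2 = w) (hy : y = (a - b) / 2)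
    (hl : l = y ^ 2) :
    l ≠ 0 ∧ l ≠ 1 ∧ 4 * (1 - l + l ^ 2) ^ 3 = 27 * x * l ^ 2 * (1 - l) ^ 2 := by
  have hcub : v ^ 6 + 2 * x * v ^ 3 + x ^ 3 = 0 := by linear_combination (v ^ 3 + s + x) * hv + hs
  have hv0 : v ≠ 0 := by
    rintro rfl
    exact hx (pow_eq_zero_iff three_ne_zero |>.mp (by simpa using hcub))
  have hres := cubic_resolvent_of_cardano hv0 hcub hw
  have hwl : w * l = (1 - l) ^ 2 := by rw [hl, hy]; exact mul_sq_half_sub_eq_sq ha hb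
  refine ⟨?_, ?_, hexic_of_cubic_resolvent hwl hres⟩
  · rintro rfl
    simp at hwl
  · rintro rfl
    have hw0 : w = 0 := by simpa using hwl
    subst hw0
    norm_num at hres
end

section
/- Let x be a nonzero complex number, and define, using principal branches of complex powers, v = ((x² − x³)^(1/2) − x)^(1/3) and w = (3/2)(x/v + v) − 1. Then v ≠ 0 and 4(w + 1)³ = 27 x w. -/
/-!
Put `s = (x² - x³)^(1/2)`, so `s² = x² - x³` and `v³ = s - x`. Then
`(v³ + x)² = s² = x² - x³`, i.e. `(v, x)` lies on the curve `v⁶ + 2 x v³ + x³ = 0`;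
in particular `v = 0` would force `x = 0`. Clearing the denominator `v` in
`w + 1 = 3 (x + v²) / (2 v)` turns `4 (w + 1)³ = 27 x w` into a multiple of the curve equation.
-/

theorem Complex.cpow_one_div_nat_pow (z : ℂ) {n : ℕ} (hn : n ≠ 0) :
    (z ^ ((1 : ℂ) / n)) ^ n = z := by
  rw [one_div]
  exact cpow_nat_inv_pow z hn

theorem pow_six_add_two_mul_pow_three_add_pow_three_eq_zero {R : Type*} [CommRing R]
    {x s v : R} (hs : s ^ 2 = x ^ 2 - x ^ 3) (hv : v ^ 3 = s - x) :
    v ^ 6 + 2 * x * v ^ 3 + x ^ 3 = 0 := by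
  linear_combination (v ^ 3 + x + s) * hv + hs

theorem ne_zero_of_pow_six_add_two_mul_pow_three_add_pow_three_eq_zero {R : Type*}
    [CommRing R] [NoZeroDivisors R] {x v : R} (hx : x ≠ 0)
    (h : v ^ 6 + 2 * x * v ^ 3 + x ^ 3 = 0) : v ≠ 0 := by
  rintro rfl
  exact hx (pow_eq_zero_iff three_ne_zero |>.mp (by simpa using h))

theorem four_mul_add_one_pow_three_eq_s9 {K : Type*} [Field K] [NeZero (2 : K)]
    {x v : K} (hv : v ≠ 0) (h : v ^ 6 + 2 * x * v ^ 3 + x ^ 3 = 0) :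
    4 * (3 / 2 * (x / v + v) - 1 + 1) ^ 3 = 27 * x * (3 / 2 * (x / v + v) - 1) := by
  field_simp
  linear_combination 108 * h

/-- With principal branches: for `x ≠ 0`, `v = ((x² - x³)^(1/2) - x)^(1/3)`
and `w = (3/2)(x/v + v) - 1` satisfy `v ≠ 0` and `4(w + 1)³ = 27 x w`. -/
theorem stmt_9 (x : ℂ) (hx : x ≠ 0)
    (v : ℂ) (hv : v = ((x ^ 2 - x ^ 3) ^ ((1 : ℂ) / 2) - x) ^ ((1 : ℂ) / 3))
    (w : ℂ) (hw : w = 3 / 2 * (x / v + v) - 1) :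
    v ≠ 0 ∧ 4 * (w + 1) ^ 3 = 27 * x * w := by
  have hs := Complex.cpow_one_div_nat_pow (x ^ 2 - x ^ 3) two_ne_zero
  have hv3 := Complex.cpow_one_div_nat_pow ((x ^ 2 - x ^ 3) ^ ((1 : ℂ) / 2) - x) three_ne_zero
  push_cast at hs hv3
  rw [← hv] at hv3
  have hcurve := pow_six_add_two_mul_pow_three_add_pow_three_eq_zero hs hv3
  have hv0 := ne_zero_of_pow_six_add_two_mul_pow_three_add_pow_three_eq_zero hx hcurve
  exact ⟨hv0, hw ▸ four_mul_add_one_pow_three_eq_s9 hv0 hcurve⟩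
end

section
/- Let x be a nonzero complex number, and define, using principal branches of complex powers: v = ((x² − x³)^(1/2) − x)^(1/3), w = (3/2)(x/v + v) − 1, y = ((w + 4)^(1/2) − w^(1/2))/2, and λ = y². Then λ ≠ 0, λ ≠ 1, and 4(1 − λ + λ²)³ = 27 x λ² (1 − λ)². -/
/-!
The cube root `v` is a root of the Cardano resolvent for the depressed cubic `t³ = 3xt - 2x`,
with `t = x / v + v`; hence `w = 3t/2 - 1` satisfies `4(w + 1)³ = 27xw`. On the other side,
`y = (√(w + 4) - √w)/2` is a root of `y² + √w y - 1 = 0`, which for `λ = y²` squares to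
`λ w = (λ - 1)²`. Substituting `λ(w + 1) = 1 - λ + λ²` into the cubic gives the identity.
-/

namespace Complex

theorem cube_add_div_eq_of_cardano {x s v : ℂ} (hs : s ^ 2 = x ^ 2 - x ^ 3)
    (hv : v ^ 3 = s - x) : (x / v + v) ^ 3 = 3 * x * (x / v + v) - 2 * x := by
  rcases eq_or_ne v 0 with rfl | hv0
  · have hx3 : x ^ 3 = 0 := by linear_combination hs + (s + x) * hv
    simp [pow_eq_zero_iff three_ne_zero |>.mp hx3]
  · field_simp
    linear_combination (v ^ 3 + x + s) * hv + hs

theorem four_mul_add_one_pow_three_eq {x t : ℂ} (ht : t ^ 3 = 3 * x * t - 2 * x) :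
    4 * (3 / 2 * t - 1 + 1) ^ 3 = 27 * x * (3 / 2 * t - 1) := by
  linear_combination 27 / 2 * ht

section HalfDifferenceOfRoots

variable {w a b : ℂ}

theorem half_sub_sq_mul_eq (ha : a ^ 2 = w + 4) (hb : b ^ 2 = w) :
    ((a - b) / 2) ^ 2 * w = (((a - b) / 2) ^ 2 - 1) ^ 2 := by
  subst hb
  linear_combination -(1 / 16) * ((a - b) ^ 2 - 4 - 2 * (a - b) * b) * ha

theorem half_sub_sq_ne_zero (ha : a ^ 2 = w + 4) (hb : b ^ 2 = w) : ((a - b) / 2) ^ 2 ≠ 0 := by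
  intro h
  have hab : a = b := by linear_combination (pow_eq_zero_iff two_ne_zero).mp h * 2
  have : (4 : ℂ) = 0 := by linear_combination hb - ha + (a + b) * hab
  norm_num at this

end HalfDifferenceOfRoots

theorem modular_relation_of_cubic {x w l : ℂ} (hcubic : 4 * (w + 1) ^ 3 = 27 * x * w)
    (hlw : l * w = (l - 1) ^ 2) : 4 * (1 - l + l ^ 2) ^ 3 = 27 * x * l ^ 2 * (1 - l) ^ 2 :=
  calc 4 * (1 - l + l ^ 2) ^ 3
      = l ^ 3 * (4 * (w + 1) ^ 3) := by
        rw [show 1 - l + l ^ 2 = l * (w + 1) by linear_combination -hlw]; ring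
    _ = 27 * x * l ^ 2 * (l * w) := by rw [hcubic]; ring
    _ = 27 * x * l ^ 2 * (1 - l) ^ 2 := by rw [hlw]; ring

end Complex

open Complex in
theorem stmt_10_general (x : ℂ)
    (v : ℂ) (hv : v = ((x ^ 2 - x ^ 3) ^ ((1 : ℂ) / 2) - x) ^ ((1 : ℂ) / 3))
    (w : ℂ) (hw : w = 3 / 2 * (x / v + v) - 1)
    (y : ℂ) (hy : y = ((w + 4) ^ ((1 : ℂ) / 2) - w ^ ((1 : ℂ) / 2)) / 2)
    (l : ℂ) (hl : l = y ^ 2) :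
    l ≠ 0 ∧ l ≠ 1 ∧ 4 * (1 - l + l ^ 2) ^ 3 = 27 * x * l ^ 2 * (1 - l) ^ 2 := by
  have sqrt_sq (z : ℂ) : (z ^ ((1 : ℂ) / 2)) ^ 2 = z := by rw [one_div, cpow_ofNat_inv_pow]
  have hv3 : v ^ 3 = (x ^ 2 - x ^ 3) ^ ((1 : ℂ) / 2) - x := by
    rw [hv, one_div (3 : ℂ), cpow_ofNat_inv_pow]
  have hcubic : 4 * (w + 1) ^ 3 = 27 * x * w :=
    hw ▸ four_mul_add_one_pow_three_eq (cube_add_div_eq_of_cardano (sqrt_sq _) hv3)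
  have hlw : l * w = (l - 1) ^ 2 := hl ▸ hy ▸ half_sub_sq_mul_eq (sqrt_sq _) (sqrt_sq _)
  refine ⟨hl ▸ hy ▸ half_sub_sq_ne_zero (sqrt_sq _) (sqrt_sq _), ?_,
    modular_relation_of_cubic hcubic hlw⟩
  rintro rfl
  have hw0 : w = 0 := by simpa using hlw
  norm_num [hw0] at hcubic

/-- With principal branches: for `x ≠ 0`, set `v = ((x² - x³)^(1/2) - x)^(1/3)`,
`w = (3/2)(x/v + v) - 1`, `y = ((w + 4)^(1/2) - w^(1/2))/2`, `λ = y²`. Then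
`λ ≠ 0`, `λ ≠ 1`, and `4(1 - λ + λ²)³ = 27 x λ² (1 - λ)²`. -/
theorem stmt_10 (x : ℂ) (hx : x ≠ 0)
    (v : ℂ) (hv : v = ((x ^ 2 - x ^ 3) ^ ((1 : ℂ) / 2) - x) ^ ((1 : ℂ) / 3))
    (w : ℂ) (hw : w = 3 / 2 * (x / v + v) - 1)
    (y : ℂ) (hy : y = ((w + 4) ^ ((1 : ℂ) / 2) - w ^ ((1 : ℂ) / 2)) / 2)
    (l : ℂ) (hl : l = y ^ 2) :
    l ≠ 0 ∧ l ≠ 1 ∧ 4 * (1 - l + l ^ 2) ^ 3 = 27 * x * l ^ 2 * (1 - l) ^ 2 :=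
  stmt_10_general x v hv w hw y hy l hl
end
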